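/- arXiv:math/0508650 — 4 statements merged into one kernel-verified Lean document; each statement's English description precedes it below -/
import Mathlib

section
/- Fix 0 < τ < 1 and 1 < r < p < ∞. Let (n_k)_{k≥1} be a strictly increasing sequence of positive integers with n₁ = 1 and with the gaps n_{k+1} − n_k nondecreasing and tending to infinity; define ρ(i) = 0 if i = n_k for some k and ρ(i) = 1 otherwise, and let M := M_ρ. Let C_{M,1} denote the closed convex hull in the Banach space C([0,1]) of the closure of the set of functions { t ↦ M(λt)/M(λ) : 0 < λ < 1 }. Then for every N ∈ C_{M,1}, either (i) there exists a constant C ≥ 1 such that (1/C)·M(t) ≤ N(t) ≤ C·M(t) for all t ∈ (0,1] (i.e., N is equivalent to M), or (ii) τ^{2p}·t^p ≤ N(t) ≤ τ^{−3p}·t^p for all t ∈ (0,1] (i.e., N is equivalent to t^p with uniform constants). -/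
/-!
Write `M (τ ^ k) = τ ^ F k`, where `F (k + 1) - F k` is `r` or `p` according as `ρ (k + 1)` is
`0` or `1`. Since the zeros `n₁ = 1 < n₂ < ⋯` of `ρ` have nondecreasing gaps, no window
`(μ, μ + k]` contains more zeros than `(0, k]`, so `F` is superadditive. Comparing piecewise-linear
functions at the nodes `τ ^ k` only, this gives `τ^p t^p ≤ M (λ t) / M λ ≤ τ^(-p) M t`, and both
bounds pass to the closed convex hull.

If `N t₁ > τ^(-3p) t₁^p` for some `t₁`, use that the gaps tend to infinity: far out, a window of
the length of `t₁`'s cell contains at most one zero, so `M (λ t₁) / M λ ≤ τ^(r-3p) t₁^p` for all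
`λ ≤ τ ^ m₀`, while `M (λ t) / M λ ≥ τ^(p m₀) M t` for `λ > τ ^ m₀`. Either way an inequality
that is affine in the function holds between its values at `t₁` and at `t`; it passes to `N` and
gives `N ≥ c M`.
-/

open Finset in
/-- `M` is the Orlicz function `M_η` of Lindenstrauss–Tzafriri associated to
`0 < τ < 1`, `1 < r < p < ∞` and a 0-1 sequence `η`: the continuous piecewise-linear
function on `[0,1]` with `M 0 = 0`, `M (τ^k) = τ^(rk + (p-r)·Σ_{n=1}^k η n)` for
`k ≥ 0` (in particular `M 1 = 1`), affine on each interval `[τ^(k+1), τ^k]`. -/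
def IsMeta (τ r p : ℝ) (η : ℕ → ℝ) (M : ℝ → ℝ) : Prop :=
  M 0 = 0 ∧
  (∀ k : ℕ, M (τ ^ k) = τ ^ (r * (k : ℝ) + (p - r) * ∑ n ∈ Finset.Icc 1 k, η n)) ∧
  (∀ k : ℕ, ∀ x ∈ Set.Icc (τ ^ (k + 1)) (τ ^ k),
    M x = M (τ ^ (k + 1)) +
      (x - τ ^ (k + 1)) * (M (τ ^ k) - M (τ ^ (k + 1))) / (τ ^ k - τ ^ (k + 1)))

open Set Filter

theorem le_of_mem_closure_convexHull_closure {E : Type*} [AddCommGroup E] [Module ℝ E]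
    [TopologicalSpace E] {S : Set E} {x : E} (hx : x ∈ closure (convexHull ℝ (closure S)))
    (ℓ : E →L[ℝ] ℝ) {c : ℝ} (hS : ∀ y ∈ S, ℓ y ≤ c) : ℓ x ≤ c := by
  have hT : IsClosed {y | ℓ y ≤ c} := isClosed_le ℓ.continuous continuous_const
  exact closure_minimal (convexHull_min (closure_minimal hS hT)
    (convex_halfSpace_le ℓ.isLinear c)) hT hx

theorem ContinuousMap.le_of_mem_closure_convexHull_closure {X : Type*} [TopologicalSpace X]
    {S : Set C(X, ℝ)} {N : C(X, ℝ)} (hN : N ∈ closure (convexHull ℝ (closure S))) (s t : X)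
    {a b c : ℝ} (hS : ∀ f ∈ S, a * f s + b * f t ≤ c) : a * N s + b * N t ≤ c :=
  _root_.le_of_mem_closure_convexHull_closure hN
    (a • ContinuousMap.evalCLM ℝ s + b • ContinuousMap.evalCLM ℝ t : C(X, ℝ) →L[ℝ] ℝ) hS

theorem exists_one_le_one_div_mul_le_and_le_mul {X : Type*} {f g : X → ℝ} (hg : ∀ x, 0 ≤ g x)
    {c D : ℝ} (hc : 0 < c) (hlow : ∀ x, c * g x ≤ f x) (hup : ∀ x, f x ≤ D * g x) :
    ∃ C, 1 ≤ C ∧ ∀ x, 1 / C * g x ≤ f x ∧ f x ≤ C * g x := by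
  refine ⟨max (max (1 / c) D) 1, le_max_right _ _, fun x => ⟨?_, ?_⟩⟩
  · refine le_trans (mul_le_mul_of_nonneg_right ?_ (hg x)) (hlow x)
    rw [one_div_le (by positivity) hc]
    exact (le_max_left _ _).trans (le_max_left _ _)
  · exact (hup x).trans (mul_le_mul_of_nonneg_right
      ((le_max_right _ _).trans (le_max_left _ _)) (hg x))

def CellwiseAffine (τ : ℝ) (f : ℝ → ℝ) : Prop :=
  ∀ k : ℕ, ∃ a b : ℝ, ∀ x ∈ Icc (τ ^ (k + 1)) (τ ^ k), f x = a * x + b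

namespace CellwiseAffine

variable {τ : ℝ} {f : ℝ → ℝ}

theorem const_mul (hf : CellwiseAffine τ f) (c : ℝ) : CellwiseAffine τ (fun x => c * f x) := by
  intro k
  obtain ⟨a, b, h⟩ := hf k
  exact ⟨c * a, c * b, fun x hx => by simp only [h x hx]; ring⟩

theorem comp_pow_mul (hf : CellwiseAffine τ f) (hτ : 0 ≤ τ) (μ : ℕ) :
    CellwiseAffine τ (fun x => f (τ ^ μ * x)) := by
  intro k
  obtain ⟨a, b, h⟩ := hf (μ + k)
  refine ⟨a * τ ^ μ, b, fun x hx => ?_⟩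
  have hμ : 0 ≤ τ ^ μ := pow_nonneg hτ μ
  show f _ = _
  rw [h _ ⟨?_, ?_⟩]
  · ring
  · rw [add_assoc, pow_add]; exact mul_le_mul_of_nonneg_left hx.1 hμ
  · rw [pow_add]; exact mul_le_mul_of_nonneg_left hx.2 hμ

theorem convexOn (hf : CellwiseAffine τ f) (k : ℕ) :
    ConvexOn ℝ (Icc (τ ^ (k + 1)) (τ ^ k)) f := by
  obtain ⟨a, b, h⟩ := hf k
  refine ⟨convex_Icc _ _, fun x hx y hy s t hs ht hst => ?_⟩
  rw [h x hx, h y hy, h _ (convex_Icc _ _ hx hy hs ht hst), smul_eq_mul, smul_eq_mul,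
    smul_eq_mul, smul_eq_mul]
  exact (by linear_combination (-b) * hst : _ = _).le

theorem concaveOn (hf : CellwiseAffine τ f) (k : ℕ) :
    ConcaveOn ℝ (Icc (τ ^ (k + 1)) (τ ^ k)) f := by
  obtain ⟨a, b, h⟩ := hf k
  refine ⟨convex_Icc _ _, fun x hx y hy s t hs ht hst => ?_⟩
  rw [h x hx, h y hy, h _ (convex_Icc _ _ hx hy hs ht hst), smul_eq_mul, smul_eq_mul,
    smul_eq_mul, smul_eq_mul]
  exact (by linear_combination b * hst : _ = _).le

theorem monotoneOn (hf : CellwiseAffine τ f) (hτ0 : 0 < τ) (hτ1 : τ < 1) (k : ℕ)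
    (hk : f (τ ^ (k + 1)) ≤ f (τ ^ k)) : MonotoneOn f (Icc (τ ^ (k + 1)) (τ ^ k)) := by
  obtain ⟨a, b, h⟩ := hf k
  have hlt : τ ^ (k + 1) < τ ^ k := pow_lt_pow_right_of_lt_one₀ hτ0 hτ1 k.lt_succ_self
  have hl : τ ^ (k + 1) ∈ Icc (τ ^ (k + 1)) (τ ^ k) := left_mem_Icc.2 hlt.le
  have hr : τ ^ k ∈ Icc (τ ^ (k + 1)) (τ ^ k) := right_mem_Icc.2 hlt.le
  have ha : 0 ≤ a := by
    rw [h _ hl, h _ hr] at hk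
    nlinarith
  intro x hx y hy hxy
  rw [h x hx, h y hy]
  nlinarith

end CellwiseAffine

theorem le_of_forall_pow_le {τ : ℝ} (hτ0 : 0 < τ) (hτ1 : τ < 1) {φ ψ : ℝ → ℝ}
    (hφ : ∀ k : ℕ, ConvexOn ℝ (Icc (τ ^ (k + 1)) (τ ^ k)) φ)
    (hψ : ∀ k : ℕ, ConcaveOn ℝ (Icc (τ ^ (k + 1)) (τ ^ k)) ψ)
    (h0 : φ 0 ≤ ψ 0) (hpow : ∀ k : ℕ, φ (τ ^ k) ≤ ψ (τ ^ k)) {x : ℝ} (hx : x ∈ Icc 0 1) :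
    φ x ≤ ψ x := by
  rcases hx.1.eq_or_lt with rfl | hx0
  · exact h0
  obtain ⟨k, hk1, hk2⟩ := exists_nat_pow_near_of_lt_one hx0 hx.2 hτ0 hτ1
  have hle : τ ^ (k + 1) ≤ τ ^ k := pow_le_pow_of_le_one hτ0.le hτ1.le k.le_succ
  obtain ⟨s, t, hs, ht, hst, rfl⟩ := Icc_subset_segment ⟨hk1.le, hk2⟩
  calc φ (s • τ ^ (k + 1) + t • τ ^ k) ≤ s • φ (τ ^ (k + 1)) + t • φ (τ ^ k) :=
        (hφ k).2 (left_mem_Icc.2 hle) (right_mem_Icc.2 hle) hs ht hst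
    _ ≤ s • ψ (τ ^ (k + 1)) + t • ψ (τ ^ k) := by
        simp only [smul_eq_mul]; gcongr <;> exact hpow _
    _ ≤ ψ (s • τ ^ (k + 1) + t • τ ^ k) :=
        (hψ k).2 (left_mem_Icc.2 hle) (right_mem_Icc.2 hle) hs ht hst

noncomputable def zeroCount (η : ℕ → ℝ) (a b : ℕ) : ℕ :=
  ((Finset.Ioc a b).filter (fun i => η i = 0)).card

section GapSequence

variable {nk : ℕ → ℕ}

theorem strictMonoOn_Ici_one (hmono : ∀ k : ℕ, 1 ≤ k → nk k < nk (k + 1)) :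
    StrictMonoOn nk (Ici 1) :=
  strictMonoOn_of_lt_add_one ordConnected_Ici fun a _ ha _ => hmono a ha

theorem add_le_add_of_gap_mono (hmono : ∀ k : ℕ, 1 ≤ k → nk k < nk (k + 1))
    (hgap : ∀ k : ℕ, 1 ≤ k → nk (k + 1) - nk k ≤ nk (k + 2) - nk (k + 1))
    {a : ℕ} (ha : 1 ≤ a) (d : ℕ) : nk (1 + d) + nk a ≤ nk (a + d) + nk 1 := by
  have hgapMono : MonotoneOn (fun k => nk (k + 1) - nk k) (Ici 1) :=
    monotoneOn_of_le_add_one ordConnected_Ici fun k _ hk _ => hgap k hk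
  induction d with
  | zero => simp [add_comm]
  | succ d ih =>
    have hg : nk (1 + d + 1) - nk (1 + d) ≤ nk (a + d + 1) - nk (a + d) :=
      hgapMono (by simp) (by simp; omega) (by omega)
    have h1 := hmono (1 + d) (by omega)
    have h2 := hmono (a + d) (by omega)
    rw [← add_assoc, ← add_assoc]
    omega

variable {ρ : ℕ → ℝ}

theorem eq_zero_iff_exists (hρ0 : ∀ k : ℕ, 1 ≤ k → ρ (nk k) = 0)
    (hρ1 : ∀ i : ℕ, (∀ k : ℕ, 1 ≤ k → nk k ≠ i) → ρ i = 1) (i : ℕ) :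
    ρ i = 0 ↔ ∃ j, 1 ≤ j ∧ nk j = i := by
  refine ⟨fun h => ?_, fun ⟨j, hj, hji⟩ => hji ▸ hρ0 j hj⟩
  by_contra! hi
  simp [hρ1 i hi] at h

theorem eq_zero_or_eq_one (hρ0 : ∀ k : ℕ, 1 ≤ k → ρ (nk k) = 0)
    (hρ1 : ∀ i : ℕ, (∀ k : ℕ, 1 ≤ k → nk k ≠ i) → ρ i = 1) (i : ℕ) : ρ i = 0 ∨ ρ i = 1 := by
  by_cases hi : ∃ j, 1 ≤ j ∧ nk j = i
  · exact Or.inl ((eq_zero_iff_exists hρ0 hρ1 i).2 hi)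
  · push Not at hi
    exact Or.inr (hρ1 i hi)

theorem zeroCount_add_le (hnk1 : nk 1 = 1) (hmono : ∀ k : ℕ, 1 ≤ k → nk k < nk (k + 1))
    (hgap : ∀ k : ℕ, 1 ≤ k → nk (k + 1) - nk k ≤ nk (k + 2) - nk (k + 1))
    (hzero : ∀ i, ρ i = 0 ↔ ∃ j, 1 ≤ j ∧ nk j = i) (μ k : ℕ) :
    zeroCount ρ μ (μ + k) ≤ zeroCount ρ 0 k := by
  -- The zeros in the window are among `nk a, …, nk b`; by the gap condition the `b - a + 1`
  -- zeros `nk 1, …, nk (1 + (b - a))` all lie in `(0, k]`.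
  have hsm := strictMonoOn_Ici_one hmono
  set Z := (Finset.Ioc μ (μ + k)).filter (fun i => ρ i = 0)
  rcases Z.eq_empty_or_nonempty with hZ | hZ
  · change Z.card ≤ _
    simp [hZ]
  have hmemZ : ∀ i ∈ Z, μ < i ∧ i ≤ μ + k ∧ ρ i = 0 := fun i hi => by
    simpa [Z, and_assoc] using hi
  obtain ⟨a, ha, hai⟩ := (hzero _).1 (hmemZ _ (Z.min'_mem hZ)).2.2
  obtain ⟨b, hb, hbi⟩ := (hzero _).1 (hmemZ _ (Z.max'_mem hZ)).2.2
  have hab : a ≤ b := (hsm.le_iff_le ha hb).1 (hai ▸ hbi ▸ Z.min'_le _ (Z.max'_mem hZ))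
  have hwindow : Z ⊆ (Finset.Icc a b).image nk := by
    intro i hi
    obtain ⟨j, hj, rfl⟩ := (hzero _).1 (hmemZ i hi).2.2
    refine Finset.mem_image.2 ⟨j, Finset.mem_Icc.2 ⟨?_, ?_⟩, rfl⟩
    · exact (hsm.le_iff_le ha hj).1 (hai ▸ Z.min'_le _ hi)
    · exact (hsm.le_iff_le hj hb).1 (hbi ▸ Z.le_max' _ hi)
  have hinitial : (Finset.Icc 1 (1 + (b - a))).image nk ⊆
      (Finset.Ioc 0 k).filter (fun i => ρ i = 0) := by
    intro i hi
    obtain ⟨j, hj, rfl⟩ := Finset.mem_image.1 hi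
    rw [Finset.mem_Icc] at hj
    have hshift := add_le_add_of_gap_mono hmono hgap ha (b - a)
    rw [Nat.add_sub_cancel' hab] at hshift
    have hj1 : nk 1 ≤ nk j := hsm.monotoneOn self_mem_Ici hj.1 hj.1
    have hjb : nk j ≤ nk (1 + (b - a)) := hsm.monotoneOn hj.1 (by simp) hj.2
    have hμa := (hmemZ _ (Z.min'_mem hZ)).1
    have hbμ := (hmemZ _ (Z.max'_mem hZ)).2.1
    rw [← hai] at hμa
    rw [← hbi] at hbμ
    simp only [Finset.mem_filter, Finset.mem_Ioc]
    exact ⟨⟨by omega, by omega⟩, (hzero _).2 ⟨j, hj.1, rfl⟩⟩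
  calc Z.card ≤ ((Finset.Icc a b).image nk).card := Finset.card_le_card hwindow
    _ ≤ (Finset.Icc a b).card := Finset.card_image_le
    _ = (Finset.Icc 1 (1 + (b - a))).card := by simp only [Nat.card_Icc]; omega
    _ = ((Finset.Icc 1 (1 + (b - a))).image nk).card :=
        (Finset.card_image_of_injOn (hsm.injOn.mono fun j hj => (Finset.mem_Icc.1 hj).1)).symm
    _ ≤ zeroCount ρ 0 k := Finset.card_le_card hinitial

theorem eventually_zeroCount_le_one (hmono : ∀ k : ℕ, 1 ≤ k → nk k < nk (k + 1))
    (hzero : ∀ i, ρ i = 0 ↔ ∃ j, 1 ≤ j ∧ nk j = i)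
    (hgap' : Tendsto (fun k => nk (k + 1) - nk k) atTop atTop) (k : ℕ) :
    ∀ᶠ m in atTop, zeroCount ρ m (m + k) ≤ 1 := by
  have hsm := strictMonoOn_Ici_one hmono
  obtain ⟨J, hJ⟩ := eventually_atTop.1 (hgap'.eventually_ge_atTop k)
  have hfar : ∀ a b, 1 ≤ a → a < b → nk (J + 1) < nk a → nk a + k ≤ nk b := by
    intro a b ha hab hJa
    have hJa : J + 1 < a := (hsm.lt_iff_lt (by simp) ha).1 hJa
    have hgapa := hJ a (by omega)
    have hstep := hmono a ha
    have hab' : nk (a + 1) ≤ nk b := hsm.monotoneOn (by simp) (by simp; omega) hab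
    omega
  refine eventually_atTop.2 ⟨nk (J + 1), fun m hm => Finset.card_le_one.2 fun i hi i' hi' => ?_⟩
  simp only [Finset.mem_filter, Finset.mem_Ioc] at hi hi'
  obtain ⟨a, ha, rfl⟩ := (hzero _).1 hi.2
  obtain ⟨b, hb, rfl⟩ := (hzero _).1 hi'.2
  rcases lt_trichotomy a b with h | rfl | h
  · have := hfar a b ha h (by omega); omega
  · rfl
  · have := hfar b a hb h (by omega); omega

end GapSequence

noncomputable def metaExp (r p : ℝ) (η : ℕ → ℝ) (k : ℕ) : ℝ :=
  r * k + (p - r) * ∑ n ∈ Finset.Icc 1 k, η n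

section MetaExp

variable {r p : ℝ} {η : ℕ → ℝ}

@[simp] theorem metaExp_zero : metaExp r p η 0 = 0 := by simp [metaExp]

theorem zeroCount_le_sub (a b : ℕ) : zeroCount η a b ≤ b - a :=
  (Finset.card_filter_le _ _).trans (Nat.card_Ioc a b).le

theorem metaExp_add (hη : ∀ n, η n = 0 ∨ η n = 1) (m k : ℕ) :
    metaExp r p η (m + k) = metaExp r p η m + p * k - (p - r) * zeroCount η m (m + k) := by
  have hcount : (zeroCount η m (m + k) : ℝ) = ∑ i ∈ Finset.Ioc m (m + k), (1 - η i) := by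
    rw [zeroCount, ← Finset.sum_boole]
    refine Finset.sum_congr rfl fun i _ => ?_
    rcases hη i with h | h <;> simp [h]
  have hIcc : ∀ n, Finset.Icc 1 n = Finset.Ioc 0 n := Finset.Icc_add_one_left_eq_Ioc 0
  rw [metaExp, metaExp, hIcc, hIcc, ← Finset.sum_Ioc_consecutive _ m.zero_le (m.le_add_right k),
    hcount, Finset.sum_sub_distrib, Finset.sum_const, Nat.card_Ioc, Nat.add_sub_cancel_left]
  push_cast
  ring

theorem metaExp_add_le (hη : ∀ n, η n = 0 ∨ η n = 1) (hrp : r ≤ p) (m k : ℕ) :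
    metaExp r p η (m + k) ≤ metaExp r p η m + p * k := by
  rw [metaExp_add hη]
  have := mul_nonneg (sub_nonneg.2 hrp) (zeroCount η m (m + k)).cast_nonneg
  linarith

theorem add_mul_le_metaExp_add (hη : ∀ n, η n = 0 ∨ η n = 1) (hrp : r ≤ p) (m k : ℕ) :
    metaExp r p η m + r * k ≤ metaExp r p η (m + k) := by
  rw [metaExp_add hη]
  have hk : (zeroCount η m (m + k) : ℝ) ≤ k := by
    exact_mod_cast (zeroCount_le_sub m (m + k)).trans (Nat.add_sub_cancel_left m k).le
  nlinarith

theorem metaExp_mono (hη : ∀ n, η n = 0 ∨ η n = 1) (hr : 0 ≤ r) (hrp : r ≤ p) :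
    Monotone (metaExp r p η) :=
  monotone_nat_of_le_succ fun n => by
    have := add_mul_le_metaExp_add hη hrp n 1
    push_cast at this
    linarith

theorem metaExp_add_metaExp_le (hη : ∀ n, η n = 0 ∨ η n = 1) (hrp : r ≤ p) {m k : ℕ}
    (hwin : zeroCount η m (m + k) ≤ zeroCount η 0 k) :
    metaExp r p η m + metaExp r p η k ≤ metaExp r p η (m + k) := by
  have hk := metaExp_add (r := r) (p := p) hη 0 k
  rw [zero_add, metaExp_zero] at hk
  rw [metaExp_add hη m k, hk]
  have : (zeroCount η m (m + k) : ℝ) ≤ zeroCount η 0 k := by exact_mod_cast hwin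
  nlinarith

end MetaExp

/-- The set `C_{M,1}`. -/
def dilationHull (M : ℝ → ℝ) : Set C(Icc (0 : ℝ) 1, ℝ) :=
  closure (convexHull ℝ (closure {f | ∃ lam : ℝ, 0 < lam ∧ lam < 1 ∧
    ∀ t : Icc (0 : ℝ) 1, f t = M (lam * t) / M lam}))

structure MetaSetting (τ r p : ℝ) (η : ℕ → ℝ) (M : ℝ → ℝ) : Prop where
  tau_pos : 0 < τ
  tau_lt_one : τ < 1
  r_nonneg : 0 ≤ r
  r_le_p : r ≤ p
  one_le_p : 1 ≤ p
  zero_or_one : ∀ n, η n = 0 ∨ η n = 1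
  isMeta : IsMeta τ r p η M

theorem IsMeta.cellwiseAffine {τ r p : ℝ} {η : ℕ → ℝ} {M : ℝ → ℝ} (hM : IsMeta τ r p η M) :
    CellwiseAffine τ M := fun k =>
  ⟨(M (τ ^ k) - M (τ ^ (k + 1))) / (τ ^ k - τ ^ (k + 1)),
    M (τ ^ (k + 1)) - τ ^ (k + 1) * ((M (τ ^ k) - M (τ ^ (k + 1))) / (τ ^ k - τ ^ (k + 1))),
    fun x hx => by rw [hM.2.2 k x hx]; ring⟩

namespace MetaSetting

variable {τ r p : ℝ} {η : ℕ → ℝ} {M : ℝ → ℝ}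

theorem apply_pow (H : MetaSetting τ r p η M) (k : ℕ) : M (τ ^ k) = τ ^ metaExp r p η k :=
  H.isMeta.2.1 k

theorem rpow_le_rpow_of_exponent_ge (H : MetaSetting τ r p η M) {a b : ℝ} (h : a ≤ b) :
    τ ^ b ≤ τ ^ a :=
  Real.rpow_le_rpow_of_exponent_ge H.tau_pos H.tau_lt_one.le h

theorem pow_succ_le_pow (H : MetaSetting τ r p η M) (k : ℕ) : τ ^ (k + 1) ≤ τ ^ k :=
  pow_le_pow_of_le_one H.tau_pos.le H.tau_lt_one.le k.le_succ

theorem antitone_apply_pow (H : MetaSetting τ r p η M) : Antitone fun k : ℕ => M (τ ^ k) :=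
  fun a b hab => by
    simp only [H.apply_pow]
    exact H.rpow_le_rpow_of_exponent_ge (metaExp_mono H.zero_or_one H.r_nonneg H.r_le_p hab)

theorem monotoneOn_cell (H : MetaSetting τ r p η M) (k : ℕ) :
    MonotoneOn M (Icc (τ ^ (k + 1)) (τ ^ k)) :=
  H.isMeta.cellwiseAffine.monotoneOn H.tau_pos H.tau_lt_one k (H.antitone_apply_pow k.le_succ)

theorem apply_mem_Icc (H : MetaSetting τ r p η M) {m : ℕ} {x : ℝ}
    (hx : x ∈ Icc (τ ^ (m + 1)) (τ ^ m)) :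
    M x ∈ Icc (τ ^ metaExp r p η (m + 1)) (τ ^ metaExp r p η m) := by
  rw [← H.apply_pow, ← H.apply_pow]
  exact ⟨H.monotoneOn_cell m (left_mem_Icc.2 (H.pow_succ_le_pow m)) hx hx.1,
    H.monotoneOn_cell m hx (right_mem_Icc.2 (H.pow_succ_le_pow m)) hx.2⟩

theorem pos (H : MetaSetting τ r p η M) {x : ℝ} (hx0 : 0 < x) (hx1 : x ≤ 1) : 0 < M x := by
  obtain ⟨m, hm1, hm2⟩ := exists_nat_pow_near_of_lt_one hx0 hx1 H.tau_pos H.tau_lt_one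
  exact (Real.rpow_pos_of_pos H.tau_pos _).trans_le (H.apply_mem_Icc ⟨hm1.le, hm2⟩).1

theorem nonneg (H : MetaSetting τ r p η M) {x : ℝ} (hx : x ∈ Icc 0 1) : 0 ≤ M x := by
  rcases hx.1.eq_or_lt with rfl | hx0
  · exact H.isMeta.1.ge
  · exact (H.pos hx0 hx.2).le

theorem monotoneOn (H : MetaSetting τ r p η M) : MonotoneOn M (Icc 0 1) := by
  intro x hx y hy hxy
  rcases hx.1.eq_or_lt with rfl | hx0
  · rw [H.isMeta.1]; exact H.nonneg hy
  obtain ⟨kx, hkx1, hkx2⟩ := exists_nat_pow_near_of_lt_one hx0 hx.2 H.tau_pos H.tau_lt_one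
  obtain ⟨ky, hky1, hky2⟩ :=
    exists_nat_pow_near_of_lt_one (hx0.trans_le hxy) hy.2 H.tau_pos H.tau_lt_one
  have hk : ky ≤ kx := by
    by_contra! h
    have : τ ^ ky ≤ τ ^ (kx + 1) := pow_le_pow_of_le_one H.tau_pos.le H.tau_lt_one.le h
    linarith
  rcases hk.eq_or_lt with rfl | hk
  · exact H.monotoneOn_cell ky ⟨hkx1.le, hkx2⟩ ⟨hky1.le, hky2⟩ hxy
  calc M x ≤ M (τ ^ kx) :=
        H.monotoneOn_cell kx ⟨hkx1.le, hkx2⟩ (right_mem_Icc.2 (H.pow_succ_le_pow kx)) hkx2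
    _ ≤ M (τ ^ (ky + 1)) := H.antitone_apply_pow hk
    _ ≤ M y :=
        H.monotoneOn_cell ky (left_mem_Icc.2 (H.pow_succ_le_pow ky)) ⟨hky1.le, hky2⟩ hky1.le

theorem apply_le_one (H : MetaSetting τ r p η M) {x : ℝ} (hx : x ∈ Icc 0 1) : M x ≤ 1 := by
  have h1 : M 1 = 1 := by simpa using H.apply_pow 0
  exact h1 ▸ H.monotoneOn hx (right_mem_Icc.2 zero_le_one) hx.2

theorem rpow_mul_rpow_le_apply_pow_mul (H : MetaSetting τ r p η M) (μ : ℕ) {x : ℝ}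
    (hx : x ∈ Icc 0 1) : τ ^ metaExp r p η μ * x ^ p ≤ M (τ ^ μ * x) := by
  refine le_of_forall_pow_le H.tau_pos H.tau_lt_one (φ := fun x => τ ^ metaExp r p η μ * x ^ p)
    (fun k => ?_) (H.isMeta.cellwiseAffine.comp_pow_mul H.tau_pos.le μ).concaveOn ?_
    (fun k => ?_) hx
  · exact ((convexOn_rpow H.one_le_p).smul (Real.rpow_pos_of_pos H.tau_pos _).le).subset
      (fun x hx => (pow_nonneg H.tau_pos.le _).trans hx.1) (convex_Icc _ _)
  · simp [Real.zero_rpow (by linarith [H.one_le_p] : p ≠ 0), H.isMeta.1]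
  · rw [← pow_add, H.apply_pow, ← Real.rpow_natCast_mul H.tau_pos.le, ← Real.rpow_add H.tau_pos]
    exact H.rpow_le_rpow_of_exponent_ge (by linarith [metaExp_add_le H.zero_or_one H.r_le_p μ k])

theorem apply_pow_mul_le (H : MetaSetting τ r p η M)
    (hsuper : ∀ m k, metaExp r p η m + metaExp r p η k ≤ metaExp r p η (m + k)) (μ : ℕ)
    {x : ℝ} (hx : x ∈ Icc 0 1) : M (τ ^ μ * x) ≤ τ ^ metaExp r p η μ * M x := by
  refine le_of_forall_pow_le H.tau_pos H.tau_lt_one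
    (H.isMeta.cellwiseAffine.comp_pow_mul H.tau_pos.le μ).convexOn
    (H.isMeta.cellwiseAffine.const_mul _).concaveOn ?_ (fun k => ?_) hx
  · simp [H.isMeta.1]
  · rw [← pow_add, H.apply_pow, H.apply_pow, ← Real.rpow_add H.tau_pos]
    exact H.rpow_le_rpow_of_exponent_ge (hsuper μ k)

theorem rpow_mul_le_apply_pow_mul (H : MetaSetting τ r p η M) (μ : ℕ) {x : ℝ}
    (hx : x ∈ Icc 0 1) : τ ^ (p * μ) * M x ≤ M (τ ^ μ * x) := by
  refine le_of_forall_pow_le H.tau_pos H.tau_lt_one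
    (H.isMeta.cellwiseAffine.const_mul _).convexOn
    (H.isMeta.cellwiseAffine.comp_pow_mul H.tau_pos.le μ).concaveOn ?_ (fun k => ?_) hx
  · simp [H.isMeta.1]
  · rw [← pow_add, H.apply_pow, H.apply_pow, ← Real.rpow_add H.tau_pos, add_comm μ]
    exact H.rpow_le_rpow_of_exponent_ge (by linarith [metaExp_add_le H.zero_or_one H.r_le_p k μ])

theorem pow_mem_Icc (H : MetaSetting τ r p η M) (k : ℕ) : τ ^ k ∈ Icc (0 : ℝ) 1 :=
  ⟨pow_nonneg H.tau_pos.le k, pow_le_one₀ H.tau_pos.le H.tau_lt_one.le⟩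

theorem rpow_mul_rpow_le_div (H : MetaSetting τ r p η M) {lam x : ℝ} (hlam0 : 0 < lam)
    (hlam1 : lam ≤ 1) (hx : x ∈ Icc 0 1) : τ ^ p * x ^ p ≤ M (lam * x) / M lam := by
  obtain ⟨m, hm1, hm2⟩ := exists_nat_pow_near_of_lt_one hlam0 hlam1 H.tau_pos H.tau_lt_one
  rw [le_div_iff₀ (H.pos hlam0 hlam1)]
  have hxp : 0 ≤ x ^ p := Real.rpow_nonneg hx.1 p
  calc τ ^ p * x ^ p * M lam ≤ τ ^ p * x ^ p * τ ^ metaExp r p η m := by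
        refine mul_le_mul_of_nonneg_left (H.apply_mem_Icc ⟨hm1.le, hm2⟩).2 ?_
        exact mul_nonneg (Real.rpow_pos_of_pos H.tau_pos _).le hxp
    _ ≤ τ ^ metaExp r p η (m + 1) * x ^ p := by
        rw [mul_right_comm, ← Real.rpow_add H.tau_pos]
        refine mul_le_mul_of_nonneg_right (H.rpow_le_rpow_of_exponent_ge ?_) hxp
        have := metaExp_add_le H.zero_or_one H.r_le_p m 1
        push_cast at this
        linarith
    _ ≤ M (τ ^ (m + 1) * x) := H.rpow_mul_rpow_le_apply_pow_mul (m + 1) hx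
    _ ≤ M (lam * x) := H.monotoneOn (unitInterval.mul_mem (H.pow_mem_Icc _) hx)
        (unitInterval.mul_mem ⟨hlam0.le, hlam1⟩ hx) (mul_le_mul_of_nonneg_right hm1.le hx.1)

theorem div_le_rpow_neg_mul (H : MetaSetting τ r p η M)
    (hsuper : ∀ m k, metaExp r p η m + metaExp r p η k ≤ metaExp r p η (m + k))
    {lam x : ℝ} (hlam0 : 0 < lam) (hlam1 : lam ≤ 1) (hx : x ∈ Icc 0 1) :
    M (lam * x) / M lam ≤ τ ^ (-p) * M x := by
  obtain ⟨m, hm1, hm2⟩ := exists_nat_pow_near_of_lt_one hlam0 hlam1 H.tau_pos H.tau_lt_one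
  rw [div_le_iff₀ (H.pos hlam0 hlam1)]
  calc M (lam * x) ≤ M (τ ^ m * x) := H.monotoneOn (unitInterval.mul_mem ⟨hlam0.le, hlam1⟩ hx)
        (unitInterval.mul_mem (H.pow_mem_Icc _) hx) (mul_le_mul_of_nonneg_right hm2 hx.1)
    _ ≤ τ ^ metaExp r p η m * M x := H.apply_pow_mul_le hsuper m hx
    _ ≤ τ ^ (-p) * M x * τ ^ metaExp r p η (m + 1) := by
        rw [mul_right_comm, ← Real.rpow_add H.tau_pos]
        refine mul_le_mul_of_nonneg_right (H.rpow_le_rpow_of_exponent_ge ?_) (H.nonneg hx)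
        have := metaExp_add_le H.zero_or_one H.r_le_p m 1
        push_cast at this
        linarith
    _ ≤ τ ^ (-p) * M x * M lam :=
        mul_le_mul_of_nonneg_left (H.apply_mem_Icc ⟨hm1.le, hm2⟩).1
          (mul_nonneg (Real.rpow_pos_of_pos H.tau_pos _).le (H.nonneg hx))

theorem rpow_mul_le_div (H : MetaSetting τ r p η M) {j : ℕ} {lam x : ℝ} (hlam : τ ^ j < lam)
    (hlam1 : lam ≤ 1) (hx : x ∈ Icc 0 1) : τ ^ (p * j) * M x ≤ M (lam * x) / M lam := by
  have hlam0 : 0 < lam := (pow_pos H.tau_pos j).trans hlam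
  rw [le_div_iff₀ (H.pos hlam0 hlam1)]
  calc τ ^ (p * j) * M x * M lam ≤ τ ^ (p * j) * M x :=
        mul_le_of_le_one_right (mul_nonneg (Real.rpow_pos_of_pos H.tau_pos _).le (H.nonneg hx))
          (H.apply_le_one ⟨hlam0.le, hlam1⟩)
    _ ≤ M (τ ^ j * x) := H.rpow_mul_le_apply_pow_mul j hx
    _ ≤ M (lam * x) := H.monotoneOn (unitInterval.mul_mem (H.pow_mem_Icc _) hx)
        (unitInterval.mul_mem ⟨hlam0.le, hlam1⟩ hx) (mul_le_mul_of_nonneg_right hlam.le hx.1)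

theorem div_le_rpow_mul_rpow (H : MetaSetting τ r p η M) {k m₀ : ℕ}
    (hsparse : ∀ m ≥ m₀, zeroCount η m (m + k) ≤ 1) {lam x : ℝ} (hlam0 : 0 < lam)
    (hlam : lam ≤ τ ^ m₀) (hxk : τ ^ (k + 1) < x) (hxk' : x ≤ τ ^ k) :
    M (lam * x) / M lam ≤ τ ^ (r - 3 * p) * x ^ p := by
  have hlam1 : lam ≤ 1 := hlam.trans (H.pow_mem_Icc m₀).2
  obtain ⟨m, hm1, hm2⟩ := exists_nat_pow_near_of_lt_one hlam0 hlam1 H.tau_pos H.tau_lt_one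
  have hm : m₀ ≤ m := by
    have := (pow_lt_pow_iff_right_of_lt_one₀ H.tau_pos H.tau_lt_one).1 (hm1.trans_le hlam)
    omega
  have hexp : p * (k + 1 : ℕ) + (r - 3 * p) + metaExp r p η (m + 1) ≤ metaExp r p η (m + k) := by
    have hwindow := metaExp_add (r := r) (p := p) H.zero_or_one m k
    have hstep := metaExp_add_le H.zero_or_one H.r_le_p m 1
    have hcount : (zeroCount η m (m + k) : ℝ) ≤ 1 := by exact_mod_cast hsparse m hm
    have := mul_le_mul_of_nonneg_left hcount (sub_nonneg.2 H.r_le_p)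
    push_cast at hstep ⊢
    linarith
  have hx0 : 0 < x := (pow_pos H.tau_pos _).trans hxk
  rw [div_le_iff₀ (H.pos hlam0 hlam1)]
  calc M (lam * x) ≤ M (τ ^ (m + k)) := by
        refine H.monotoneOn (unitInterval.mul_mem ⟨hlam0.le, hlam1⟩ ⟨hx0.le, ?_⟩)
          (H.pow_mem_Icc _) ?_
        · exact hxk'.trans (H.pow_mem_Icc k).2
        · rw [pow_add]; exact mul_le_mul hm2 hxk' hx0.le (pow_nonneg H.tau_pos.le m)
    _ ≤ τ ^ (r - 3 * p) * (τ ^ (k + 1)) ^ p * τ ^ metaExp r p η (m + 1) := by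
        rw [H.apply_pow, ← Real.rpow_natCast_mul H.tau_pos.le, ← Real.rpow_add H.tau_pos,
          ← Real.rpow_add H.tau_pos]
        exact H.rpow_le_rpow_of_exponent_ge (by linarith)
    _ ≤ τ ^ (r - 3 * p) * x ^ p * M lam := by
        have hτ : ∀ a : ℝ, 0 ≤ τ ^ a := fun a => (Real.rpow_pos_of_pos H.tau_pos a).le
        refine mul_le_mul (mul_le_mul_of_nonneg_left ?_ (hτ _)) (H.apply_mem_Icc ⟨hm1.le, hm2⟩).1
          (hτ _) (mul_nonneg (hτ _) (Real.rpow_nonneg hx0.le p))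
        exact Real.rpow_le_rpow (pow_nonneg H.tau_pos.le _) hxk.le (by linarith [H.one_le_p])

theorem rpow_mul_rpow_le_of_mem (H : MetaSetting τ r p η M) {N : C(Icc (0 : ℝ) 1, ℝ)}
    (hN : N ∈ dilationHull M) (t : Icc (0 : ℝ) 1) : τ ^ p * (t : ℝ) ^ p ≤ N t := by
  have := ContinuousMap.le_of_mem_closure_convexHull_closure hN t t (a := 0) (b := -1)
    (c := -(τ ^ p * (t : ℝ) ^ p)) <| by
      rintro f ⟨lam, hlam0, hlam1, hf⟩
      rw [hf]
      linarith [H.rpow_mul_rpow_le_div hlam0 hlam1.le t.2]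
  linarith

theorem le_rpow_neg_mul_of_mem (H : MetaSetting τ r p η M)
    (hsuper : ∀ m k, metaExp r p η m + metaExp r p η k ≤ metaExp r p η (m + k))
    {N : C(Icc (0 : ℝ) 1, ℝ)} (hN : N ∈ dilationHull M) (t : Icc (0 : ℝ) 1) :
    N t ≤ τ ^ (-p) * M t := by
  have := ContinuousMap.le_of_mem_closure_convexHull_closure hN t t (a := 0) (b := 1)
    (c := τ ^ (-p) * M t) <| by
      rintro f ⟨lam, hlam0, hlam1, hf⟩
      rw [hf]
      linarith [H.div_le_rpow_neg_mul hsuper hlam0 hlam1.le t.2]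
  linarith

theorem exists_pos_mul_le_of_mem (H : MetaSetting τ r p η M)
    (hsuper : ∀ m k, metaExp r p η m + metaExp r p η k ≤ metaExp r p η (m + k))
    (hsparse : ∀ k, ∀ᶠ m in atTop, zeroCount η m (m + k) ≤ 1)
    {N : C(Icc (0 : ℝ) 1, ℝ)} (hN : N ∈ dilationHull M) {t₁ : Icc (0 : ℝ) 1}
    (ht₁ : 0 < (t₁ : ℝ)) (hbig : τ ^ (-(3 * p)) * (t₁ : ℝ) ^ p < N t₁) :
    ∃ c > 0, ∀ t : Icc (0 : ℝ) 1, c * M t ≤ N t := by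
  obtain ⟨k, hk1, hk2⟩ := exists_nat_pow_near_of_lt_one ht₁ t₁.2.2 H.tau_pos H.tau_lt_one
  obtain ⟨m₀, hm₀⟩ := eventually_atTop.1 (hsparse k)
  set θ := τ ^ (r - 3 * p) * (t₁ : ℝ) ^ p
  set D := τ ^ (-p) * M t₁
  set a := τ ^ (p * m₀)
  have hτ : ∀ b : ℝ, 0 < τ ^ b := Real.rpow_pos_of_pos H.tau_pos
  have hD : 0 < D := mul_pos (hτ _) (H.pos ht₁ t₁.2.2)
  have hθ : θ < N t₁ := lt_of_le_of_lt (mul_le_mul_of_nonneg_right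
    (H.rpow_le_rpow_of_exponent_ge (by linarith [H.r_nonneg])) (Real.rpow_nonneg t₁.2.1 p)) hbig
  -- dilations by `λ > τ ^ m₀` dominate `a • M`, the others are at most `θ` at `t₁`
  have key (t : Icc (0 : ℝ) 1) : a * M t * N t₁ + (-D) * N t ≤ a * M t * θ := by
    refine ContinuousMap.le_of_mem_closure_convexHull_closure hN t₁ t ?_
    rintro f ⟨lam, hlam0, hlam1, hf⟩
    rw [hf, hf]
    have haM : 0 ≤ a * M t := mul_nonneg (hτ _).le (H.nonneg t.2)
    have hθ0 : 0 ≤ θ := mul_nonneg (hτ _).le (Real.rpow_nonneg t₁.2.1 p)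
    rcases lt_or_ge (τ ^ m₀) lam with hshallow | hdeep
    · have hup := H.div_le_rpow_neg_mul hsuper hlam0 hlam1.le t₁.2
      have hlow := H.rpow_mul_le_div hshallow hlam1.le t.2
      nlinarith [mul_le_mul_of_nonneg_left hup haM, mul_le_mul_of_nonneg_left hlow hD.le]
    · have hsmall := H.div_le_rpow_mul_rpow hm₀ hlam0 hdeep hk1 hk2
      have hpos : 0 ≤ M (lam * t) / M lam :=
        div_nonneg (H.nonneg (unitInterval.mul_mem ⟨hlam0.le, hlam1.le⟩ t.2))
          (H.pos hlam0 hlam1.le).le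
      nlinarith [mul_le_mul_of_nonneg_left hsmall haM]
  refine ⟨a * (N t₁ - θ) / D, div_pos (mul_pos (hτ _) (by linarith)) hD, fun t => ?_⟩
  rw [div_mul_eq_mul_div, div_le_iff₀ hD]
  linarith [key t]

end MetaSetting

theorem statement11_general (τ r p : ℝ) (hτ0 : 0 < τ) (hτ1 : τ < 1) (hr : 1 < r) (hrp : r < p)
    (nk : ℕ → ℕ) (hnk1 : nk 1 = 1)
    (hmono : ∀ k : ℕ, 1 ≤ k → nk k < nk (k + 1))
    (hgap : ∀ k : ℕ, 1 ≤ k → nk (k + 1) - nk k ≤ nk (k + 2) - nk (k + 1))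
    (hgap' : Filter.Tendsto (fun k => nk (k + 1) - nk k) Filter.atTop Filter.atTop)
    (ρ : ℕ → ℝ)
    (hρ0 : ∀ k : ℕ, 1 ≤ k → ρ (nk k) = 0)
    (hρ1 : ∀ i : ℕ, (∀ k : ℕ, 1 ≤ k → nk k ≠ i) → ρ i = 1)
    (M : ℝ → ℝ) (hM : IsMeta τ r p ρ M) :
    ∀ N : C(Set.Icc (0 : ℝ) 1, ℝ),
      N ∈ closure (convexHull ℝ (closure
        {f : C(Set.Icc (0 : ℝ) 1, ℝ) | ∃ lam : ℝ, 0 < lam ∧ lam < 1 ∧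
          ∀ t : Set.Icc (0 : ℝ) 1, f t = M (lam * (t : ℝ)) / M lam})) →
      (∃ C : ℝ, 1 ≤ C ∧ ∀ t : Set.Icc (0 : ℝ) 1, 0 < (t : ℝ) →
          (1 / C) * M (t : ℝ) ≤ N t ∧ N t ≤ C * M (t : ℝ)) ∨
      (∀ t : Set.Icc (0 : ℝ) 1, 0 < (t : ℝ) →
          τ ^ (2 * p) * (t : ℝ) ^ p ≤ N t ∧ N t ≤ τ ^ (-(3 * p)) * (t : ℝ) ^ p) := by
  intro N hN
  have hzero := eq_zero_iff_exists hρ0 hρ1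
  have hη := eq_zero_or_eq_one hρ0 hρ1
  have H : MetaSetting τ r p ρ M := ⟨hτ0, hτ1, by linarith, hrp.le, by linarith, hη, hM⟩
  have hsuper (m k : ℕ) : metaExp r p ρ m + metaExp r p ρ k ≤ metaExp r p ρ (m + k) :=
    metaExp_add_metaExp_le hη hrp.le (zeroCount_add_le hnk1 hmono hgap hzero m k)
  by_cases hsmall : ∀ t : Set.Icc (0 : ℝ) 1, 0 < (t : ℝ) → N t ≤ τ ^ (-(3 * p)) * (t : ℝ) ^ p
  · refine Or.inr fun t ht => ⟨le_trans ?_ (H.rpow_mul_rpow_le_of_mem hN t), hsmall t ht⟩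
    exact mul_le_mul_of_nonneg_right (H.rpow_le_rpow_of_exponent_ge (by linarith))
      (Real.rpow_nonneg t.2.1 p)
  push Not at hsmall
  obtain ⟨t₁, ht₁, hbig⟩ := hsmall
  obtain ⟨c, hc, hcN⟩ := H.exists_pos_mul_le_of_mem hsuper
    (eventually_zeroCount_le_one hmono hzero hgap') hN ht₁ hbig
  obtain ⟨C, hC, hCN⟩ := exists_one_le_one_div_mul_le_and_le_mul (fun t => H.nonneg t.2) hc hcN
    (H.le_rpow_neg_mul_of_mem hsuper hN)
  exact Or.inl ⟨C, hC, fun t _ => hCN t⟩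

/-- Lemma 3.8 (b), (c). Every `N ∈ C_{M,1}` is either equivalent to
`M` or satisfies `τ^{2p} t^p ≤ N t ≤ τ^{-3p} t^p` on `(0,1]`. -/
theorem statement11 (τ r p : ℝ) (hτ0 : 0 < τ) (hτ1 : τ < 1) (hr : 1 < r) (hrp : r < p)
    (h1 : τ ^ (r - 1) * (1 - τ ^ p) ≤ 1 - τ ^ r)
    (h2 : τ ^ (p - 1) * (1 - τ ^ r) ≤ 1 - τ ^ p)
    (nk : ℕ → ℕ) (hnk1 : nk 1 = 1)
    (hmono : ∀ k : ℕ, 1 ≤ k → nk k < nk (k + 1))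
    (hgap : ∀ k : ℕ, 1 ≤ k → nk (k + 1) - nk k ≤ nk (k + 2) - nk (k + 1))
    (hgap' : Filter.Tendsto (fun k => nk (k + 1) - nk k) Filter.atTop Filter.atTop)
    (ρ : ℕ → ℝ)
    (hρ0 : ∀ k : ℕ, 1 ≤ k → ρ (nk k) = 0)
    (hρ1 : ∀ i : ℕ, (∀ k : ℕ, 1 ≤ k → nk k ≠ i) → ρ i = 1)
    (M : ℝ → ℝ) (hM : IsMeta τ r p ρ M) :
    ∀ N : C(Set.Icc (0 : ℝ) 1, ℝ),
      N ∈ closure (convexHull ℝ (closure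
        {f : C(Set.Icc (0 : ℝ) 1, ℝ) | ∃ lam : ℝ, 0 < lam ∧ lam < 1 ∧
          ∀ t : Set.Icc (0 : ℝ) 1, f t = M (lam * (t : ℝ)) / M lam})) →
      (∃ C : ℝ, 1 ≤ C ∧ ∀ t : Set.Icc (0 : ℝ) 1, 0 < (t : ℝ) →
          (1 / C) * M (t : ℝ) ≤ N t ∧ N t ≤ C * M (t : ℝ)) ∨
      (∀ t : Set.Icc (0 : ℝ) 1, 0 < (t : ℝ) →
          τ ^ (2 * p) * (t : ℝ) ^ p ≤ N t ∧ N t ≤ τ ^ (-(3 * p)) * (t : ℝ) ^ p) :=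
  statement11_general τ r p hτ0 hτ1 hr hrp nk hnk1 hmono hgap hgap' ρ hρ0 hρ1 M hM
end

section
/- Fix 0 < τ < 1 and 1 < r < p < ∞. Let (n_k)_{k≥1} be a strictly increasing sequence of positive integers with n₁ = 1 and with the gaps n_{k+1} − n_k nondecreasing and tending to infinity; define ρ(i) = 0 if i = n_k for some k and ρ(i) = 1 otherwise, and let M := M_ρ. Then for every t ∈ (0,1) there exists λ̄ ∈ (0,1) such that for all λ with 0 < λ < λ̄: τ^{2p}·t^p ≤ M(λt)/M(λ) ≤ τ^{−3p}·t^p. -/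
private lemma aux_affine {A B a b x : ℝ} (hAB : A ≤ B) (hab : a < b) (hax : a ≤ x)
    (hxb : x ≤ b) :
    A ≤ A + (x - a) * (B - A) / (b - a) ∧ A + (x - a) * (B - A) / (b - a) ≤ B := by
  have hba : (0:ℝ) < b - a := by linarith
  constructor
  · have h0 : 0 ≤ (x - a) * (B - A) / (b - a) :=
      div_nonneg (mul_nonneg (by linarith) (by linarith)) hba.le
    linarith
  · have h1 : (x - a) * (B - A) / (b - a) ≤ B - A := by
      rw [div_le_iff₀ hba]; nlinarith
    linarith

private lemma aux_exists {τ : ℝ} (hτ0 : 0 < τ) (hτ1 : τ < 1) {x : ℝ} (hx0 : 0 < x)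
    (hx1 : x < 1) : ∃ m : ℕ, τ ^ (m + 1) ≤ x ∧ x < τ ^ m := by
  have hex : ∃ n, τ ^ n ≤ x := by
    obtain ⟨n, hn⟩ := exists_pow_lt_of_lt_one hx0 hτ1
    exact ⟨n, hn.le⟩
  rcases hn0 : Nat.find hex with _ | m
  · exfalso
    have h := Nat.find_spec hex
    rw [hn0, pow_zero] at h
    linarith
  · refine ⟨m, ?_, ?_⟩
    · have h := Nat.find_spec hex; rwa [hn0] at h
    · by_contra h
      push_neg at h
      exact Nat.find_min hex (by omega : m < Nat.find hex) h

private lemma aux_sum_ge (s : Finset ℕ) (f : ℕ → ℝ)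
    (h01 : ∀ i ∈ s, f i = 0 ∨ f i = 1)
    (huniq : ∀ i ∈ s, ∀ j ∈ s, f i = 0 → f j = 0 → i = j) :
    (s.card : ℝ) - 1 ≤ ∑ i ∈ s, f i := by
  classical
  by_cases h : ∃ i ∈ s, f i = 0
  · obtain ⟨i₀, hi₀s, hi₀⟩ := h
    have hcard : 1 ≤ s.card := Finset.card_pos.mpr ⟨i₀, hi₀s⟩
    have hsum : ∑ i ∈ s.erase i₀, f i + f i₀ = ∑ i ∈ s, f i := Finset.sum_erase_add s f hi₀s
    have hall : ∀ j ∈ s.erase i₀, f j = 1 := by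
      intro j hj
      rcases h01 j (Finset.mem_of_mem_erase hj) with h0 | h1
      · exact absurd (huniq j (Finset.mem_of_mem_erase hj) i₀ hi₀s h0 hi₀)
          (Finset.ne_of_mem_erase hj)
      · exact h1
    have h1 : ∑ i ∈ s.erase i₀, f i = ((s.erase i₀).card : ℝ) := by
      rw [Finset.sum_congr rfl hall, Finset.sum_const, nsmul_eq_mul, mul_one]
    have h2 : (s.erase i₀).card = s.card - 1 := Finset.card_erase_of_mem hi₀s
    have h3 : ((s.card - 1 : ℕ) : ℝ) = (s.card : ℝ) - 1 := by
      push_cast [Nat.cast_sub hcard]; ring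
    rw [← hsum, h1, h2, hi₀, h3]
    linarith
  · push_neg at h
    have h1 : ∑ i ∈ s, f i = (s.card : ℝ) := by
      rw [Finset.sum_congr rfl (fun j hj => ((h01 j hj).resolve_left (h j hj))),
        Finset.sum_const, nsmul_eq_mul, mul_one]
    linarith [h1]

set_option maxHeartbeats 1600000

open Finset in
/-- inequality (3.5) in the proof of Lemma 3.8. For every
`t ∈ (0,1)` there is `λ̄ ∈ (0,1)` such that `τ^{2p} t^p ≤ M(λ t)/M(λ) ≤ τ^{-3p} t^p`
for all `0 < λ < λ̄`. -/
theorem statement12 (τ r p : ℝ) (hτ0 : 0 < τ) (hτ1 : τ < 1) (hr : 1 < r) (hrp : r < p)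
    (h1 : τ ^ (r - 1) * (1 - τ ^ p) ≤ 1 - τ ^ r)
    (h2 : τ ^ (p - 1) * (1 - τ ^ r) ≤ 1 - τ ^ p)
    (nk : ℕ → ℕ) (hnk1 : nk 1 = 1)
    (hmono : ∀ k : ℕ, 1 ≤ k → nk k < nk (k + 1))
    (hgap : ∀ k : ℕ, 1 ≤ k → nk (k + 1) - nk k ≤ nk (k + 2) - nk (k + 1))
    (hgap' : Filter.Tendsto (fun k => nk (k + 1) - nk k) Filter.atTop Filter.atTop)
    (ρ : ℕ → ℝ)
    (hρ0 : ∀ k : ℕ, 1 ≤ k → ρ (nk k) = 0)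
    (hρ1 : ∀ i : ℕ, (∀ k : ℕ, 1 ≤ k → nk k ≠ i) → ρ i = 1)
    (M : ℝ → ℝ) (hM : IsMeta τ r p ρ M) :
    ∀ t : ℝ, 0 < t → t < 1 →
      ∃ lamBar : ℝ, 0 < lamBar ∧ lamBar < 1 ∧
        ∀ lam : ℝ, 0 < lam → lam < lamBar →
          τ ^ (2 * p) * t ^ p ≤ M (lam * t) / M lam ∧
            M (lam * t) / M lam ≤ τ ^ (-(3 * p)) * t ^ p := by
  classical
  obtain ⟨hM0, hMk, hMaff⟩ := hM
  have hp0 : (0:ℝ) < p := by linarith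
  have hτp : ∀ y : ℝ, 0 < τ ^ y := fun y => Real.rpow_pos_of_pos hτ0 y
  have hplel : ∀ a b : ℕ, a ≤ b → τ ^ b ≤ τ ^ a :=
    fun a b h => pow_le_pow_of_le_one hτ0.le hτ1.le h
  have hanti : ∀ {y z : ℝ}, y ≤ z → τ ^ z ≤ τ ^ y :=
    fun h => Real.rpow_le_rpow_of_exponent_ge hτ0 hτ1.le h
  have hrp' : ∀ y z : ℝ, τ ^ (y + z) = τ ^ y * τ ^ z := fun y z => Real.rpow_add hτ0 y z
  -- ρ is 0/1-valued at positive indices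
  have hρ01 : ∀ i : ℕ, 1 ≤ i → ρ i = 0 ∨ ρ i = 1 := by
    intro i hi
    by_cases h : ∃ k, 1 ≤ k ∧ nk k = i
    · obtain ⟨k, hk, he⟩ := h; exact Or.inl (he ▸ hρ0 k hk)
    · exact Or.inr (hρ1 i (fun k hk hne => h ⟨k, hk, hne⟩))
  -- the exponent function
  set E : ℕ → ℝ := fun k => r * k + (p - r) * ∑ i ∈ Ioc 0 k, ρ i with hEdef
  have hME : ∀ k : ℕ, M (τ ^ k) = τ ^ (E k) := by
    intro k
    have hIcc : (Icc 1 k : Finset ℕ) = Ioc 0 k := Finset.Icc_add_one_left_eq_Ioc 0 k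
    rw [hMk k]
    simp only [hEdef]
    rw [hIcc]
  have hEdiff : ∀ a b : ℕ, a ≤ b →
      E b - E a = r * ((b:ℝ) - a) + (p - r) * ∑ i ∈ Ioc a b, ρ i := by
    intro a b hab
    have h := Finset.sum_Ioc_consecutive ρ (Nat.zero_le a) hab
    simp only [hEdef]
    rw [← h]
    push_cast
    ring
  have hEmono : ∀ a b : ℕ, a ≤ b → E a ≤ E b := by
    intro a b hab
    have hd := hEdiff a b hab
    have hs : 0 ≤ ∑ i ∈ Ioc a b, ρ i := by
      apply Finset.sum_nonneg
      intro i hi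
      have hi1 : 1 ≤ i := by have := (Finset.mem_Ioc.mp hi).1; omega
      rcases hρ01 i hi1 with h | h <;> rw [h] <;> norm_num
    have hcast : (a:ℝ) ≤ b := Nat.cast_le.mpr hab
    nlinarith
  have hEub : ∀ a b : ℕ, a ≤ b → E b - E a ≤ p * ((b:ℝ) - a) := by
    intro a b hab
    have hd := hEdiff a b hab
    have hs : ∑ i ∈ Ioc a b, ρ i ≤ ((b:ℝ) - a) := by
      have := Finset.sum_le_card_nsmul (Ioc a b) ρ 1 (by
        intro i hi
        have hi1 : 1 ≤ i := by have := (Finset.mem_Ioc.mp hi).1; omega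
        rcases hρ01 i hi1 with h | h <;> rw [h] <;> norm_num)
      rw [Nat.card_Ioc, nsmul_eq_mul, mul_one] at this
      calc ∑ i ∈ Ioc a b, ρ i ≤ ((b - a : ℕ) : ℝ) := this
        _ = (b:ℝ) - a := by rw [Nat.cast_sub hab]
    nlinarith
  -- monotonicity of nk on indices ≥ 1
  have hmono' : ∀ x y : ℕ, 1 ≤ x → x ≤ y → nk x ≤ nk y := by
    intro x y hx hxy
    induction y with
    | zero => omega
    | succ n ih =>
      rcases Nat.lt_or_ge x (n+1) with h | h
      · have hxn : x ≤ n := by omega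
        have h1n : 1 ≤ n := by omega
        exact le_trans (ih hxn) (hmono n h1n).le
      · have : x = n + 1 := by omega
        rw [this]
  -- piecewise-linear bounds for M
  have hMle : ∀ (j : ℕ) (x : ℝ), τ ^ (j+1) ≤ x → x ≤ τ ^ j →
      τ ^ (E (j+1)) ≤ M x ∧ M x ≤ τ ^ (E j) := by
    intro j x hx1 hx2
    have hAB : τ ^ (E (j+1)) ≤ τ ^ (E j) := hanti (hEmono j (j+1) (by omega))
    have hab : τ ^ (j+1) < τ ^ j := by
      have := pow_pos hτ0 j
      calc τ ^ (j+1) = τ ^ j * τ := by ring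
        _ < τ ^ j * 1 := by nlinarith
        _ = τ ^ j := by ring
    have hx := hMaff j x ⟨hx1, hx2⟩
    rw [hx, hME j, hME (j+1)]
    exact aux_affine hAB hab hx1 hx2
  intro t ht0 ht1
  obtain ⟨N, htN1, htN2⟩ := aux_exists hτ0 hτ1 ht0 ht1
  obtain ⟨K, hK⟩ := Filter.eventually_atTop.mp (hgap'.eventually_ge_atTop (N + 2))
  set K' := max K 1 with hK'def
  have hK'1 : 1 ≤ K' := le_max_right _ _
  set m₀ := nk K' with hm₀def
  have hm₀1 : 1 ≤ m₀ := by
    have := hmono' 1 K' le_rfl hK'1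
    omega
  -- sparsity of zeros in a window of length N+2 beyond m₀
  have sparse : ∀ m : ℕ, m₀ ≤ m → ∀ i ∈ Ioc m (m+N+2), ∀ j ∈ Ioc m (m+N+2),
      ρ i = 0 → ρ j = 0 → i = j := by
    intro m hm i hi j hj hρi hρj
    have geti : ∀ i : ℕ, ρ i = 0 → ∃ a, 1 ≤ a ∧ nk a = i := by
      intro i h0
      by_contra hc
      push_neg at hc
      have := hρ1 i (fun k hk => hc k hk)
      rw [h0] at this
      norm_num at this
    obtain ⟨a, ha1, hai⟩ := geti i hρi
    obtain ⟨b, hb1, hbj⟩ := geti j hρj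
    have key : ∀ a b : ℕ, 1 ≤ a → 1 ≤ b → nk a ∈ Ioc m (m+N+2) → nk b ∈ Ioc m (m+N+2) →
        a < b → False := by
      intro a b ha hb hma hmb hab
      obtain ⟨hma1, hma2⟩ := Finset.mem_Ioc.mp hma
      obtain ⟨hmb1, hmb2⟩ := Finset.mem_Ioc.mp hmb
      have haK : K' < a := by
        by_contra h
        push_neg at h
        have := hmono' a K' ha h
        omega
      have hgapa : N + 2 ≤ nk (a+1) - nk a := hK a (by omega)
      have h2 : nk (a+1) ≤ nk b := hmono' (a+1) b (by omega) (by omega)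
      omega
    rcases lt_trichotomy a b with h | h | h
    · exact absurd (key a b ha1 hb1 (hai ▸ hi) (hbj ▸ hj) h) (fun h => h)
    · rw [← hai, ← hbj, h]
    · exact absurd (key b a hb1 ha1 (hbj ▸ hj) (hai ▸ hi) h) (fun h => h)
  refine ⟨τ ^ m₀, pow_pos hτ0 m₀, pow_lt_one₀ hτ0.le hτ1 (by omega), ?_⟩
  intro lam hlam0 hlamBar
  have hτm₀τ : τ ^ m₀ ≤ τ := by
    calc τ ^ m₀ ≤ τ ^ 1 := hplel 1 m₀ hm₀1
      _ = τ := pow_one τ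
  have hlam1 : lam < 1 := by linarith
  obtain ⟨m, hm1, hm2⟩ := aux_exists hτ0 hτ1 hlam0 hlam1
  have hmm₀ : m₀ ≤ m := by
    by_contra h
    push_neg at h
    have := hplel (m+1) m₀ (by omega)
    linarith
  have hlt0 : 0 < lam * t := mul_pos hlam0 ht0
  have hlt1 : lam * t < 1 := by nlinarith
  obtain ⟨k, hk1, hk2⟩ := aux_exists hτ0 hτ1 hlt0 hlt1
  have hkub : k ≤ m + N + 1 := by
    by_contra h
    push_neg at h
    have h3 : τ ^ k ≤ τ ^ (m+N+2) := hplel _ _ h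
    have h4 : τ ^ (m+N+2) ≤ lam * t := by
      have h5 : τ ^ (m+1) * τ ^ (N+1) ≤ lam * t :=
        mul_le_mul hm1 htN1 (pow_pos hτ0 (N+1)).le hlam0.le
      calc τ ^ (m+N+2) = τ ^ (m+1) * τ ^ (N+1) := by ring
        _ ≤ lam * t := h5
    linarith
  have hklb : m + N ≤ k := by
    by_contra h
    push_neg at h
    have h3 : τ ^ (m+N) ≤ τ ^ (k+1) := hplel _ _ (by omega)
    have h4 : lam * t < τ ^ (m+N) := by
      have h5 : lam * t < τ ^ m * τ ^ N := by nlinarith [pow_pos hτ0 m, pow_pos hτ0 N]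
      calc lam * t < τ ^ m * τ ^ N := h5
        _ = τ ^ (m+N) := by ring
    linarith
  have hMlam := hMle m lam hm1 hm2.le
  have hMlt := hMle k (lam * t) hk1 hk2.le
  have hv_pos : 0 < M lam := lt_of_lt_of_le (hτp _) hMlam.1
  -- exponent estimates
  have hE1 : E (k+1) ≤ 2*p + (N:ℝ)*p + E m := by
    have hub := hEub m (k+1) (by omega)
    have hcast : ((k:ℝ) + 1) - m ≤ (N:ℝ) + 2 := by
      have : (k:ℝ) ≤ (m:ℝ) + N + 1 := by exact_mod_cast hkub
      linarith
    have : p * (((k+1:ℕ):ℝ) - m) ≤ p * ((N:ℝ) + 2) := by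
      apply mul_le_mul_of_nonneg_left _ hp0.le
      push_cast
      linarith
    push_cast at hub this ⊢
    nlinarith
  have hE2 : -(3*p) + ((N:ℝ)+1)*p + E (m+1) ≤ E k := by
    rcases Nat.eq_zero_or_pos N with hN | hN
    · subst hN
      have hub := hEub m (m+1) (by omega)
      have hmk : E m ≤ E k := hEmono m k (by omega)
      push_cast at hub ⊢
      nlinarith
    · have hmk : E (m+N) ≤ E k := hEmono (m+N) k hklb
      have hd := hEdiff (m+1) (m+N) (by omega)
      have hsge : ((Ioc (m+1) (m+N)).card : ℝ) - 1 ≤ ∑ i ∈ Ioc (m+1) (m+N), ρ i := by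
        apply aux_sum_ge
        · intro i hi
          have hi1 : 1 ≤ i := by have := (Finset.mem_Ioc.mp hi).1; omega
          exact hρ01 i hi1
        · intro i hi j hj h0i h0j
          have hi' : i ∈ Ioc m (m+N+2) := by
            rw [Finset.mem_Ioc] at hi ⊢; omega
          have hj' : j ∈ Ioc m (m+N+2) := by
            rw [Finset.mem_Ioc] at hj ⊢; omega
          exact sparse m hmm₀ i hi' j hj' h0i h0j
      have hcard : ((Ioc (m+1) (m+N)).card : ℝ) = (N:ℝ) - 1 := by
        rw [Nat.card_Ioc]
        have : m + N - (m+1) = N - 1 := by omega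
        rw [this, Nat.cast_sub hN]
        norm_num
      rw [hcard] at hsge
      push_cast at hd ⊢
      nlinarith
  -- rpow estimates for t^p
  have tN2 : t ^ p ≤ τ ^ ((N:ℝ)*p) := by
    have h := Real.rpow_le_rpow ht0.le htN2.le hp0.le
    rwa [← Real.rpow_natCast τ N, ← Real.rpow_mul hτ0.le] at h
  have tN1 : τ ^ (((N:ℝ)+1)*p) ≤ t ^ p := by
    have h := Real.rpow_le_rpow (pow_pos hτ0 (N+1)).le htN1 hp0.le
    rw [← Real.rpow_natCast τ (N+1), ← Real.rpow_mul hτ0.le] at h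
    have : ((N+1:ℕ):ℝ) * p = ((N:ℝ)+1)*p := by push_cast; ring
    rwa [this] at h
  constructor
  · rw [le_div_iff₀ hv_pos]
    calc τ ^ (2*p) * t ^ p * M lam
        ≤ τ ^ (2*p) * τ ^ ((N:ℝ)*p) * τ ^ (E m) := by
          apply mul_le_mul
          · exact mul_le_mul_of_nonneg_left tN2 (hτp _).le
          · exact hMlam.2
          · exact hv_pos.le
          · exact mul_nonneg (hτp _).le (hτp _).le
      _ = τ ^ (2*p + (N:ℝ)*p + E m) := by rw [hrp' (2*p + (N:ℝ)*p) (E m), hrp' (2*p) ((N:ℝ)*p)]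
      _ ≤ τ ^ (E (k+1)) := hanti hE1
      _ ≤ M (lam * t) := hMlt.1
  · rw [div_le_iff₀ hv_pos]
    calc M (lam * t) ≤ τ ^ (E k) := hMlt.2
      _ ≤ τ ^ (-(3*p) + ((N:ℝ)+1)*p + E (m+1)) := hanti hE2
      _ = τ ^ (-(3*p)) * τ ^ (((N:ℝ)+1)*p) * τ ^ (E (m+1)) := by
          rw [hrp' (-(3*p) + ((N:ℝ)+1)*p) (E (m+1)), hrp' (-(3*p)) (((N:ℝ)+1)*p)]
      _ ≤ τ ^ (-(3*p)) * t ^ p * M lam := by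
          apply mul_le_mul
          · exact mul_le_mul_of_nonneg_left tN1 (hτp _).le
          · exact hMlam.1
          · exact (hτp _).le
          · exact mul_nonneg (hτp _).le (Real.rpow_nonneg ht0.le p)
end

section
/- Fix 0 < τ < 1 and 1 < r < p < ∞. Let (n_k)_{k≥1} be a strictly increasing sequence of positive integers with n₁ = 1 and with the gaps n_{k+1} − n_k nondecreasing and tending to infinity; define ρ(i) = 0 if i = n_k for some k and ρ(i) = 1 otherwise, and let M := M_ρ. Then for every positive integer m there exists K such that for all integers k ≥ K: τ^{pm} ≤ M(τ^{k+m})/M(τ^k) ≤ τ^{−p}·τ^{pm}. -/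
/-- inequality (3.4) in the proof of Lemma 3.8. For each positive
integer `m` there is `K` such that `τ^{pm} ≤ M(τ^{k+m})/M(τ^k) ≤ τ^{-p} τ^{pm}`
for all `k ≥ K`. -/
theorem statement13 (τ r p : ℝ) (hτ0 : 0 < τ) (hτ1 : τ < 1) (hr : 1 < r) (hrp : r < p)
    (nk : ℕ → ℕ) (hnk1 : nk 1 = 1)
    (hmono : ∀ k : ℕ, 1 ≤ k → nk k < nk (k + 1))
    (hgap : ∀ k : ℕ, 1 ≤ k → nk (k + 1) - nk k ≤ nk (k + 2) - nk (k + 1))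
    (hgap' : Filter.Tendsto (fun k => nk (k + 1) - nk k) Filter.atTop Filter.atTop)
    (ρ : ℕ → ℝ)
    (hρ0 : ∀ k : ℕ, 1 ≤ k → ρ (nk k) = 0)
    (hρ1 : ∀ i : ℕ, (∀ k : ℕ, 1 ≤ k → nk k ≠ i) → ρ i = 1)
    (M : ℝ → ℝ) (hM : IsMeta τ r p ρ M) :
    ∀ m : ℕ, 1 ≤ m → ∃ K : ℕ, ∀ k : ℕ, K ≤ k →
      τ ^ (p * (m : ℝ)) ≤ M (τ ^ (k + m)) / M (τ ^ k) ∧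
        M (τ ^ (k + m)) / M (τ ^ k) ≤ τ ^ (-p) * τ ^ (p * (m : ℝ)) := by
  obtain ⟨hM0, hMk, hMaff⟩ := hM
  intro m hm
  obtain ⟨J, hJgap, hJ1⟩ :=
    ((hgap'.eventually_ge_atTop (m + 1)).and (Filter.eventually_ge_atTop 1)).exists
  -- gaps are at least m+1 from index J onwards
  have hgapJ : ∀ j, J ≤ j → m + 1 ≤ nk (j + 1) - nk j := by
    intro j hj
    induction j, hj using Nat.le_induction with
    | base => exact hJgap
    | succ j hj ih => exact le_trans ih (hgap j (le_trans hJ1 hj))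
  -- strict monotonicity
  have hsm : ∀ i j : ℕ, 1 ≤ i → i < j → nk i < nk j := by
    intro i j hi hij
    induction j with
    | zero => omega
    | succ j ih =>
      rcases Nat.lt_succ_iff_lt_or_eq.mp hij with h | h
      · exact lt_trans (ih h) (hmono j (by omega))
      · subst h; exact hmono i hi
  refine ⟨max (nk J) 1, ?_⟩
  intro k hk
  have hk1 : 1 ≤ k := le_trans (le_max_right _ _) hk
  have hkJ : nk J ≤ k := le_trans (le_max_left _ _) hk
  have hzero : ∀ n : ℕ, ρ n = 0 → ∃ j, 1 ≤ j ∧ nk j = n := by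
    intro n hn
    by_contra h
    push_neg at h
    rw [hρ1 n h] at hn
    norm_num at hn
  have huniq : ∀ a b : ℕ, a ∈ Finset.Ioc k (k + m) → b ∈ Finset.Ioc k (k + m) →
      ρ a = 0 → ρ b = 0 → a = b := by
    intro a b ha hb hρa hρb
    simp only [Finset.mem_Ioc] at ha hb
    obtain ⟨ja, hja1, hjaa⟩ := hzero a hρa
    obtain ⟨jb, hjb1, hjbb⟩ := hzero b hρb
    have key : ∀ i j : ℕ, 1 ≤ i → i < j → k < nk i → nk j ≤ k + m → False := by
      intro i j hi hij hki hjk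
      have hJi : J < i := by
        by_contra h
        push_neg at h
        have : nk i ≤ nk J := by
          rcases lt_or_eq_of_le h with h' | h'
          · exact le_of_lt (hsm i J hi h')
          · rw [h']
        omega
      have h1 : m + 1 ≤ nk (i + 1) - nk i := hgapJ i (le_of_lt hJi)
      have h2 : nk i < nk (i + 1) := hmono i hi
      have h3 : nk (i + 1) ≤ nk j := by
        rcases lt_or_eq_of_le (Nat.succ_le_of_lt hij) with h' | h'
        · exact le_of_lt (hsm (i + 1) j (by omega) h')
        · exact Nat.le_of_eq (congrArg nk h')
      omega
    rcases lt_trichotomy ja jb with h | h | h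
    · exact ((key ja jb hja1 h (by omega) (by omega))).elim
    · rw [← hjaa, ← hjbb, h]
    · exact ((key jb ja hjb1 h (by omega) (by omega))).elim
  have hρ01 : ∀ n : ℕ, ρ n = 0 ∨ ρ n = 1 := by
    intro n
    by_cases h : ∃ j, 1 ≤ j ∧ nk j = n
    · obtain ⟨j, hj, rfl⟩ := h
      exact Or.inl (hρ0 j hj)
    · push_neg at h
      exact Or.inr (hρ1 n h)
  set T : ℝ := ∑ n ∈ Finset.Ioc k (k + m), ρ n with hT
  have hcard : (Finset.Ioc k (k + m)).card = m := by
    rw [Nat.card_Ioc]; omega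
  have hTle : T ≤ (m : ℝ) := by
    have : T ≤ ∑ _n ∈ Finset.Ioc k (k + m), (1 : ℝ) :=
      Finset.sum_le_sum (fun n _ => by rcases hρ01 n with h | h <;> rw [h] <;> norm_num)
    rw [Finset.sum_const, hcard, nsmul_eq_mul, mul_one] at this
    exact this
  have hTge : (m : ℝ) - 1 ≤ T := by
    by_cases h : ∃ n ∈ Finset.Ioc k (k + m), ρ n = 0
    · obtain ⟨n₀, hn₀, hρn₀⟩ := h
      have hT' : T = ∑ n ∈ (Finset.Ioc k (k + m)).erase n₀, ρ n := by
        rw [hT, ← Finset.add_sum_erase _ _ hn₀, hρn₀, zero_add]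
      have hones : ∑ n ∈ (Finset.Ioc k (k + m)).erase n₀, ρ n
          = ∑ _n ∈ (Finset.Ioc k (k + m)).erase n₀, (1 : ℝ) := by
        refine Finset.sum_congr rfl (fun n hn => ?_)
        have hn' := Finset.mem_of_mem_erase hn
        rcases hρ01 n with h0 | h1
        · exact absurd (huniq n n₀ hn' hn₀ h0 hρn₀) (Finset.ne_of_mem_erase hn)
        · exact h1
      rw [hT', hones, Finset.sum_const, nsmul_eq_mul, mul_one,
        Finset.card_erase_of_mem hn₀, hcard]
      rw [Nat.cast_sub hm, Nat.cast_one]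
    · push_neg at h
      have : T = ∑ _n ∈ Finset.Ioc k (k + m), (1 : ℝ) := by
        refine Finset.sum_congr rfl (fun n hn => ?_)
        rcases hρ01 n with h0 | h1
        · exact absurd h0 (h n hn)
        · exact h1
      rw [Finset.sum_const, hcard, nsmul_eq_mul, mul_one] at this
      linarith [this.le, this.ge]
  have hsum : (∑ n ∈ Finset.Icc 1 (k + m), ρ n) = (∑ n ∈ Finset.Icc 1 k, ρ n) + T := by
    rw [hT, show Finset.Icc 1 (k + m) = Finset.Ioc 0 (k + m) from Finset.Icc_add_one_left_eq_Ioc 0 (k + m),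
      show Finset.Icc 1 k = Finset.Ioc 0 k from Finset.Icc_add_one_left_eq_Ioc 0 k]
    exact (Finset.sum_Ioc_consecutive _ (Nat.zero_le k) (Nat.le_add_right k m)).symm
  have hratio : M (τ ^ (k + m)) / M (τ ^ k)
      = τ ^ ((r * ((k + m : ℕ) : ℝ) + (p - r) * ∑ n ∈ Finset.Icc 1 (k + m), ρ n)
          - (r * (k : ℝ) + (p - r) * ∑ n ∈ Finset.Icc 1 k, ρ n)) := by
    rw [hMk (k + m), hMk k, ← Real.rpow_sub hτ0]
  have hE : (r * ((k + m : ℕ) : ℝ) + (p - r) * ∑ n ∈ Finset.Icc 1 (k + m), ρ n)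
      - (r * (k : ℝ) + (p - r) * ∑ n ∈ Finset.Icc 1 k, ρ n)
      = r * (m : ℝ) + (p - r) * T := by
    rw [hsum]; push_cast; ring
  have hpr : (0 : ℝ) < p - r := by linarith
  have key1 : (p - r) * T ≤ (p - r) * (m : ℝ) :=
    mul_le_mul_of_nonneg_left hTle hpr.le
  have key2 : (p - r) * ((m : ℝ) - 1) ≤ (p - r) * T :=
    mul_le_mul_of_nonneg_left hTge hpr.le
  constructor
  · rw [hratio, hE, Real.rpow_le_rpow_left_iff_of_base_lt_one hτ0 hτ1]
    nlinarith
  · rw [hratio, hE, ← Real.rpow_add hτ0,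
      Real.rpow_le_rpow_left_iff_of_base_lt_one hτ0 hτ1]
    nlinarith
end

section
/- Let (x_α)_{α<ω₁} be an injective family of real numbers indexed by the countable ordinals. Define a strict partial order ≺ on the index set by: α ≺ β if and only if α > β (as ordinals) and x_α > x_β (as real numbers). Then: (i) the resulting partially ordered set contains no infinite strictly increasing sequence; (ii) it contains no uncountable chain (no uncountable set of pairwise comparable elements); and (iii) it contains no uncountable antichain (no uncountable set of pairwise incomparable elements). -/
/-!
A chain is a set of indices on which `x` is strictly increasing, and (by injectivity of `x`)
an antichain is one on which `x` is strictly decreasing. In a well-order every point of such a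
set other than its maximum has an immediate successor in it, so the image of the set has an open
gap just above each of its points, and the reals admit only countably many disjoint open gaps.
An infinite increasing sequence for `≺` would be an infinite decreasing sequence of ordinals.
-/

open Set

theorem StrictMonoOn.countable_of_wellFoundedLT {β α : Type*} [LinearOrder β] [WellFoundedLT β]
    [LinearOrder α] [TopologicalSpace α] [OrderTopology α] [SecondCountableTopology α]
    [NoMaxOrder α] {f : β → α} {s : Set β} (hf : StrictMonoOn f s) : s.Countable := by
  refine (countable_image_lt_image_Ioi_within s f).mono fun a ha => mem_sep ha ?_
  by_cases habove : (s ∩ Ioi a).Nonempty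
  · obtain ⟨m, ⟨hms, ham⟩, hmin⟩ := wellFounded_lt.has_min _ habove
    refine ⟨f m, hf ha hms ham, fun y hy hay => (hf.le_iff_le hms hy).2 ?_⟩
    exact not_lt.1 fun hym => hmin y ⟨hy, hay⟩ hym
  · obtain ⟨z, hz⟩ := exists_gt (f a)
    exact ⟨z, hz, fun y hy hay => (habove ⟨y, hy, hay⟩).elim⟩

/-- Sierpinski's example, §1. Given an injective family of reals
`(x_α)_{α < ω₁}`, the order `α ≺ β ↔ (α > β as ordinals and x_α > x_β)` has no infinite
strictly increasing sequence, no uncountable chain and no uncountable antichain. -/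
theorem statement18
    (x : {α : Ordinal // α < (Cardinal.aleph 1).ord} → ℝ)
    (hx : Function.Injective x)
    (r : {α : Ordinal // α < (Cardinal.aleph 1).ord} →
      {α : Ordinal // α < (Cardinal.aleph 1).ord} → Prop)
    (hr : ∀ a b, r a b ↔ (b.1 < a.1 ∧ x b < x a)) :
    (¬ ∃ f : ℕ → {α : Ordinal // α < (Cardinal.aleph 1).ord},
        ∀ n : ℕ, r (f n) (f (n + 1))) ∧
    (∀ C : Set {α : Ordinal // α < (Cardinal.aleph 1).ord},
        (∀ a ∈ C, ∀ b ∈ C, a ≠ b → r a b ∨ r b a) → C.Countable) ∧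
    (∀ A : Set {α : Ordinal // α < (Cardinal.aleph 1).ord},
        (∀ a ∈ A, ∀ b ∈ A, a ≠ b → ¬ r a b ∧ ¬ r b a) → A.Countable) := by
  refine ⟨?_, fun C hC => ?_, fun A hA => ?_⟩
  · rintro ⟨f, hf⟩
    obtain ⟨n, hn⟩ := WellFounded.not_rel_apply_succ (r := (· < ·)) f
    exact hn ((hr _ _).1 (hf n)).1
  · refine StrictMonoOn.countable_of_wellFoundedLT (f := x) fun a ha b hb hab => ?_
    rcases hC a ha b hb hab.ne with hrab | hrba
    · exact absurd hab ((hr a b).1 hrab).1.not_gt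
    · exact ((hr b a).1 hrba).2
  · have hanti : StrictAntiOn x A := fun a ha b hb hab => by
      have hle : x b ≤ x a := not_lt.1 fun hlt => (hA a ha b hb hab.ne).2 ((hr b a).2 ⟨hab, hlt⟩)
      exact hle.lt_of_ne fun h => hab.ne (hx h).symm
    exact hanti.dual_right.countable_of_wellFoundedLT
end
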